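/- arXiv:1806.06920 — 8 statements merged into one kernel-verified Lean document; each statement's English description precedes it below -/
import Mathlib

section
/- Let S, A be nonempty finite sets, p : S → A → PMF S, r : S → A → ℝ, γ ∈ [0,1), α > 0, and let π, q : S → PMF A with q(a|x) > 0 implying π(a|x) > 0. Let V^{π,q}_α : S → ℝ be the (unique) fixed point of the π-regularized Bellman operator T^{π,q}_α and let V^q : S → ℝ be the (unique) fixed point of the unregularized Bellman operator T^q. Then V^{π,q}_α(x) ≤ V^q(x) for every state x. -/
open scoped BigOperators ENNReal

lemma pmf_sum_toReal {β : Type*} [Fintype β] (f : PMF β) :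
    ∑ b, (f b).toReal = 1 := by
  have h := f.tsum_coe
  rw [tsum_fintype] at h
  have h2 : (∑ b, f b).toReal = (1 : ℝ≥0∞).toReal := by rw [h]
  rw [ENNReal.toReal_sum (fun b _ => f.apply_ne_top b)] at h2
  simpa using h2

lemma gibbs {β : Type*} [Fintype β] (f g : β → ℝ)
    (hf0 : ∀ b, 0 ≤ f b) (hg0 : ∀ b, 0 ≤ g b) (hfg : ∀ b, 0 < f b → 0 < g b)
    (hfs : ∑ b, f b = 1) (hgs : ∑ b, g b = 1) :
    0 ≤ ∑ b, f b * Real.log (f b / g b) := by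
  have key : ∀ b, f b * Real.log (g b / f b) ≤ g b - f b := by
    intro b
    rcases eq_or_lt_of_le (hf0 b) with h | h
    · rw [← h]; simpa using hg0 b
    · have hg := hfg b h
      have hlog := Real.log_le_sub_one_of_pos (x := g b / f b) (by positivity)
      calc f b * Real.log (g b / f b) ≤ f b * (g b / f b - 1) :=
            mul_le_mul_of_nonneg_left hlog (le_of_lt h)
        _ = g b - f b := by field_simp
  have hsum : ∑ b, f b * Real.log (g b / f b) ≤ 0 := by
    calc ∑ b, f b * Real.log (g b / f b) ≤ ∑ b, (g b - f b) :=
          Finset.sum_le_sum (fun b _ => key b)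
      _ = 0 := by rw [Finset.sum_sub_distrib, hfs, hgs]; ring
  have heq : ∀ b, f b * Real.log (f b / g b) = -(f b * Real.log (g b / f b)) := by
    intro b
    rcases eq_or_lt_of_le (hf0 b) with h | h
    · rw [← h]; ring
    · have hg := hfg b h
      rw [Real.log_div (ne_of_gt h) (ne_of_gt hg), Real.log_div (ne_of_gt hg) (ne_of_gt h)]
      ring
  rw [Finset.sum_congr rfl (fun b _ => heq b), Finset.sum_neg_distrib]
  linarith

/-- The fixed point of the π-regularized Bellman operator is dominated by the
fixed point of the unregularized Bellman operator: `V^{π,q}_α ≤ V^q` pointwise. -/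
theorem stmt_3 {S A : Type*} [Fintype S] [Nonempty S] [Fintype A] [Nonempty A]
    (p : S → A → PMF S) (r : S → A → ℝ) (γ : ℝ) (hγ0 : 0 ≤ γ) (hγ1 : γ < 1)
    (α : ℝ) (hα : 0 < α) (π q : S → PMF A)
    (hsupp : ∀ x a, 0 < q x a → 0 < π x a)
    (Vreg Vq : S → ℝ)
    (hVreg : ∀ x, Vreg x = ∑ a : A, (q x a).toReal *
      (r x a - α * Real.log ((q x a).toReal / (π x a).toReal)
        + γ * ∑ y : S, (p x a y).toReal * Vreg y))
    (hVq : ∀ x, Vq x =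
      ∑ a : A, (q x a).toReal * (r x a + γ * ∑ y : S, (p x a y).toReal * Vq y)) :
    ∀ x, Vreg x ≤ Vq x := by
  set D : S → ℝ := fun x => Vreg x - Vq x with hD
  obtain ⟨x₀, -, hx₀⟩ := Finset.exists_max_image Finset.univ D
    ⟨Classical.arbitrary S, Finset.mem_univ _⟩
  set M : ℝ := D x₀ with hM
  have hDle : ∀ x, D x ≤ M := fun x => hx₀ x (Finset.mem_univ x)
  have hDeq : ∀ x, D x = -α * (∑ a, (q x a).toReal *
      Real.log ((q x a).toReal / (π x a).toReal))
      + γ * ∑ a, (q x a).toReal * ∑ y, (p x a y).toReal * D y := by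
    intro x
    have hterm : ∀ a : A, (q x a).toReal *
        (r x a - α * Real.log ((q x a).toReal / (π x a).toReal)
          + γ * ∑ y : S, (p x a y).toReal * Vreg y)
        - (q x a).toReal * (r x a + γ * ∑ y : S, (p x a y).toReal * Vq y)
        = -(α * ((q x a).toReal * Real.log ((q x a).toReal / (π x a).toReal)))
          + γ * ((q x a).toReal * ∑ y, (p x a y).toReal * D y) := by
      intro a
      have hsub : ∑ y, (p x a y).toReal * D y
          = ∑ y, (p x a y).toReal * Vreg y - ∑ y, (p x a y).toReal * Vq y := by
        rw [← Finset.sum_sub_distrib]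
        apply Finset.sum_congr rfl
        intro y _
        simp only [hD]; ring
      rw [hsub]; ring
    have : D x = ∑ a, ((q x a).toReal *
        (r x a - α * Real.log ((q x a).toReal / (π x a).toReal)
          + γ * ∑ y : S, (p x a y).toReal * Vreg y)
        - (q x a).toReal * (r x a + γ * ∑ y : S, (p x a y).toReal * Vq y)) := by
      simp only [hD, hVreg x, hVq x, Finset.sum_sub_distrib]
    rw [this, Finset.sum_congr rfl (fun a _ => hterm a), Finset.sum_add_distrib]
    simp only [Finset.sum_neg_distrib, ← Finset.mul_sum, neg_mul]
  have hKL : ∀ x, 0 ≤ ∑ a, (q x a).toReal *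
      Real.log ((q x a).toReal / (π x a).toReal) := by
    intro x
    apply gibbs
    · intro a; exact ENNReal.toReal_nonneg
    · intro a; exact ENNReal.toReal_nonneg
    · intro a ha
      have hq : 0 < q x a := by
        by_contra h
        push_neg at h
        have : q x a = 0 := le_antisymm h zero_le
        simp [this] at ha
      exact ENNReal.toReal_pos (ne_of_gt (hsupp x a hq)) ((π x).apply_ne_top a)
    · exact pmf_sum_toReal (q x)
    · exact pmf_sum_toReal (π x)
  have h1 : ∑ a, (q x₀ a).toReal * ∑ y, (p x₀ a y).toReal * D y ≤ M := by
    calc ∑ a, (q x₀ a).toReal * ∑ y, (p x₀ a y).toReal * D y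
        ≤ ∑ a, (q x₀ a).toReal * M := by
          apply Finset.sum_le_sum
          intro a _
          apply mul_le_mul_of_nonneg_left _ ENNReal.toReal_nonneg
          calc ∑ y, (p x₀ a y).toReal * D y ≤ ∑ y, (p x₀ a y).toReal * M :=
                Finset.sum_le_sum (fun y _ =>
                  mul_le_mul_of_nonneg_left (hDle y) ENNReal.toReal_nonneg)
            _ = M := by rw [← Finset.sum_mul, pmf_sum_toReal (p x₀ a), one_mul]
      _ = M := by rw [← Finset.sum_mul, pmf_sum_toReal (q x₀), one_mul]
  have hMle : M ≤ γ * M := by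
    calc M = -α * (∑ a, (q x₀ a).toReal *
        Real.log ((q x₀ a).toReal / (π x₀ a).toReal))
        + γ * ∑ a, (q x₀ a).toReal * ∑ y, (p x₀ a y).toReal * D y := by
          rw [hM]; exact hDeq x₀
      _ ≤ 0 + γ * M := by
          apply add_le_add
          · nlinarith [hKL x₀]
          · exact mul_le_mul_of_nonneg_left h1 hγ0
      _ = γ * M := by ring
  have hM0 : M ≤ 0 := by nlinarith
  intro x
  have := (hDle x).trans hM0
  simp only [hD] at this
  linarith
end

section
/- Let S, A be nonempty finite sets, p : S → A → PMF S, r : S → A → ℝ, γ ∈ [0,1), α > 0, and let π : S → PMF A be a policy with π(a|x) > 0 for all x, a. Let V^π be the fixed point of the Bellman operator T^π and define Q^π(x,a) = r(x,a) + γ·∑_y p(y|x,a)·V^π(y). Define the policy q_i by q_i(a|x) = π(a|x)·exp(Q^π(x,a)/α) / ∑_b π(b|x)·exp(Q^π(x,b)/α). Then for every state x and every probability mass function q on A, ∑_a q(a)·(Q^π(x,a) − α·log(q(a)/π(a|x))) ≤ ∑_a q_i(a|x)·(Q^π(x,a) − α·log(q_i(a|x)/π(a|x))); that is, q_i(·|x)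 maximizes q ↦ (T^{π,q}_α V^π)(x) over probability distributions q on A. -/
open scoped BigOperators

/-- The soft-greedy reweighted policy `q_i(·|x) ∝ π(·|x)·exp(Q^π(x,·)/α)` maximizes
`q ↦ (T^{π,q}_α V^π)(x)` over probability distributions `q` on actions. -/
theorem stmt_7 {S A : Type*} [Fintype S] [Nonempty S] [Fintype A] [Nonempty A]
    (p : S → A → PMF S) (r : S → A → ℝ) (γ α : ℝ)
    (hγ0 : 0 ≤ γ) (hγ1 : γ < 1) (hα : 0 < α)
    (π : S → PMF A) (hπ : ∀ x a, 0 < π x a)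
    (V : S → ℝ)
    (hV : ∀ x, V x =
      ∑ a : A, (π x a).toReal * (r x a + γ * ∑ y : S, (p x a y).toReal * V y))
    (Qf : S → A → ℝ)
    (hQ : ∀ x a, Qf x a = r x a + γ * ∑ y : S, (p x a y).toReal * V y)
    (qi : S → A → ℝ)
    (hqi : ∀ x a, qi x a = (π x a).toReal * Real.exp (Qf x a / α) /
      ∑ b : A, (π x b).toReal * Real.exp (Qf x b / α)) :
    ∀ x, ∀ q : PMF A,
      ∑ a : A, (q a).toReal * (Qf x a - α * Real.log ((q a).toReal / (π x a).toReal))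
        ≤ ∑ a : A, qi x a * (Qf x a - α * Real.log (qi x a / (π x a).toReal)) := by
  intro x q
  set Z : ℝ := ∑ b : A, (π x b).toReal * Real.exp (Qf x b / α) with hZdef
  have hπpos : ∀ a, 0 < (π x a).toReal := by
    intro a
    have h1 : π x a ≠ 0 := (hπ x a).ne'
    have h2 : π x a ≠ ⊤ := PMF.apply_ne_top _ _
    exact ENNReal.toReal_pos h1 h2
  have hZpos : 0 < Z := by
    apply Finset.sum_pos
    · intro b _
      exact mul_pos (hπpos b) (Real.exp_pos _)
    · exact Finset.univ_nonempty
  have hqipos : ∀ a, 0 < qi x a := by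
    intro a
    rw [hqi]
    exact div_pos (mul_pos (hπpos a) (Real.exp_pos _)) hZpos
  have hqisum : ∑ a : A, qi x a = 1 := by
    simp only [hqi]
    rw [← Finset.sum_div, ← hZdef, div_self hZpos.ne']
  -- sum of q is 1
  have hqa_ne_top : ∀ a, q a ≠ ⊤ := fun a => PMF.apply_ne_top q a
  have hqsum : ∑ a : A, (q a).toReal = 1 := by
    have h := q.tsum_coe
    rw [tsum_eq_sum (s := Finset.univ) (by simp)] at h
    have := congrArg ENNReal.toReal h
    rwa [ENNReal.toReal_sum (fun a _ => hqa_ne_top a)] at this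
  -- value at qi: each term equals α * log Z
  have hRHS : ∀ a, qi x a * (Qf x a - α * Real.log (qi x a / (π x a).toReal))
      = qi x a * (α * Real.log Z) := by
    intro a
    congr 1
    have : qi x a / (π x a).toReal = Real.exp (Qf x a / α) / Z := by
      rw [hqi, ← hZdef]
      field_simp [(hπpos a).ne', hZpos.ne']
    rw [this, Real.log_div (Real.exp_pos _).ne' hZpos.ne', Real.log_exp]
    field_simp
    ring
  -- value at q: termwise identity
  have hLHS : ∀ a, (q a).toReal * (Qf x a - α * Real.log ((q a).toReal / (π x a).toReal))
      = (q a).toReal * (α * Real.log Z) + α * ((q a).toReal * Real.log (qi x a / (q a).toReal)) := by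
    intro a
    rcases eq_or_lt_of_le (ENNReal.toReal_nonneg (a := q a)) with h0 | hpos
    · rw [← h0]; simp
    · have hq := hpos
      have hlog : Real.log (qi x a / (q a).toReal)
          = Qf x a / α + Real.log (π x a).toReal - Real.log Z - Real.log (q a).toReal := by
        rw [Real.log_div (hqipos a).ne' hq.ne', hqi,
          Real.log_div (mul_pos (hπpos a) (Real.exp_pos _)).ne' hZpos.ne',
          Real.log_mul (hπpos a).ne' (Real.exp_pos _).ne', Real.log_exp]
        ring
      have hlog2 : Real.log ((q a).toReal / (π x a).toReal)
          = Real.log (q a).toReal - Real.log (π x a).toReal :=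
        Real.log_div hq.ne' (hπpos a).ne'
      rw [hlog, hlog2]
      field_simp
      ring
  simp only [hLHS, hRHS]
  rw [Finset.sum_add_distrib, ← Finset.sum_mul, ← Finset.sum_mul, hqsum, hqisum,
    ← Finset.mul_sum]
  have hKL : ∑ a : A, (q a).toReal * Real.log (qi x a / (q a).toReal) ≤ 0 := by
    have hterm : ∀ a ∈ Finset.univ, (q a).toReal * Real.log (qi x a / (q a).toReal)
        ≤ qi x a - (q a).toReal := by
      intro a _
      rcases eq_or_lt_of_le (ENNReal.toReal_nonneg (a := q a)) with h0 | hpos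
      · rw [← h0]; simp [le_of_lt (hqipos a)]
      · have ht : 0 < qi x a / (q a).toReal := div_pos (hqipos a) hpos
        have := Real.log_le_sub_one_of_pos ht
        calc (q a).toReal * Real.log (qi x a / (q a).toReal)
            ≤ (q a).toReal * (qi x a / (q a).toReal - 1) := by
              exact mul_le_mul_of_nonneg_left this hpos.le
          _ = qi x a - (q a).toReal := by field_simp
    calc ∑ a : A, (q a).toReal * Real.log (qi x a / (q a).toReal)
        ≤ ∑ a : A, (qi x a - (q a).toReal) := Finset.sum_le_sum hterm
      _ = 0 := by rw [Finset.sum_sub_distrib, hqisum, hqsum, sub_self]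
  nlinarith [hα]
end

section
/- Let S, A be nonempty finite sets, p : S → A → PMF S, r : S → A → ℝ, γ ∈ [0,1), α > 0, and let π : S → PMF A be a policy with π(a|x) > 0 for all x, a. Let V^π be the fixed point of T^π, set Q^π(x,a) = r(x,a) + γ·∑_y p(y|x,a)·V^π(y), and let q_i(a|x) = π(a|x)·exp(Q^π(x,a)/α) / ∑_b π(b|x)·exp(Q^π(x,b)/α). Then (T^{π,q_i}_α V^π)(x) ≥ V^π(x) for every state x. -/
open scoped BigOperators

/-- One-step improvement of the soft-greedy policy: `(T^{π,q_i}_α V^π)(x) ≥ V^π(x)`. -/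
theorem stmt_8 {S A : Type*} [Fintype S] [Nonempty S] [Fintype A] [Nonempty A]
    (p : S → A → PMF S) (r : S → A → ℝ) (γ α : ℝ)
    (hγ0 : 0 ≤ γ) (hγ1 : γ < 1) (hα : 0 < α)
    (π : S → PMF A) (hπ : ∀ x a, 0 < π x a)
    (V : S → ℝ)
    (hV : ∀ x, V x =
      ∑ a : A, (π x a).toReal * (r x a + γ * ∑ y : S, (p x a y).toReal * V y))
    (Qf : S → A → ℝ)
    (hQ : ∀ x a, Qf x a = r x a + γ * ∑ y : S, (p x a y).toReal * V y)
    (qi : S → A → ℝ)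
    (hqi : ∀ x a, qi x a = (π x a).toReal * Real.exp (Qf x a / α) /
      ∑ b : A, (π x b).toReal * Real.exp (Qf x b / α)) :
    ∀ x, V x ≤ ∑ a : A, qi x a *
      (r x a - α * Real.log (qi x a / (π x a).toReal)
        + γ * ∑ y : S, (p x a y).toReal * V y) := by
  intro x
  have hπ' : ∀ a, 0 < (π x a).toReal := fun a =>
    ENNReal.toReal_pos (hπ x a).ne' (PMF.apply_ne_top _ _)
  -- sum of π is 1
  have hsum1 : ∑ a : A, (π x a).toReal = 1 := by
    have h := (π x).tsum_coe
    rw [tsum_fintype] at h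
    have : (∑ a : A, π x a).toReal = 1 := by rw [h]; simp
    rwa [ENNReal.toReal_sum (fun a _ => PMF.apply_ne_top _ _)] at this
  set Z : ℝ := ∑ b : A, (π x b).toReal * Real.exp (Qf x b / α) with hZ
  have hZpos : 0 < Z := by
    apply Finset.sum_pos
    · intro b _; exact mul_pos (hπ' b) (Real.exp_pos _)
    · exact Finset.univ_nonempty
  -- qi sums to 1
  have hqisum : ∑ a : A, qi x a = 1 := by
    simp only [hqi]
    rw [← Finset.sum_div, ← hZ, div_self hZpos.ne']
  -- log(qi/π) = Q/α - log Z
  have hlog : ∀ a, Real.log (qi x a / (π x a).toReal) = Qf x a / α - Real.log Z := by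
    intro a
    have : qi x a / (π x a).toReal = Real.exp (Qf x a / α) / Z := by
      rw [hqi, ← hZ, div_div, mul_comm Z, mul_div_mul_left _ _ (hπ' a).ne']
    rw [this, Real.log_div (Real.exp_pos _).ne' hZpos.ne', Real.log_exp]
  -- RHS = α * log Z
  have hRHS : ∑ a : A, qi x a *
      (r x a - α * Real.log (qi x a / (π x a).toReal)
        + γ * ∑ y : S, (p x a y).toReal * V y) = α * Real.log Z := by
    have : ∀ a, qi x a * (r x a - α * Real.log (qi x a / (π x a).toReal)
        + γ * ∑ y : S, (p x a y).toReal * V y) = qi x a * (α * Real.log Z) := by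
      intro a
      have hq := hQ x a
      rw [hlog a]
      have : r x a + γ * ∑ y : S, (p x a y).toReal * V y = Qf x a := hq.symm
      have harr : r x a - α * (Qf x a / α - Real.log Z)
          + γ * ∑ y : S, (p x a y).toReal * V y
          = Qf x a - α * (Qf x a / α - Real.log Z) := by linarith
      rw [harr]
      field_simp
      ring
    rw [Finset.sum_congr rfl (fun a _ => this a), ← Finset.sum_mul, hqisum, one_mul]
  rw [hRHS]
  -- V x = ∑ π Q
  have hVx : V x = ∑ a : A, (π x a).toReal * Qf x a := by
    rw [hV x]
    exact Finset.sum_congr rfl (fun a _ => by rw [hQ x a])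
  -- Jensen: exp(∑ π (Q/α)) ≤ Z
  have hjensen : Real.exp (∑ a : A, (π x a).toReal * (Qf x a / α)) ≤ Z := by
    have := convexOn_exp.map_sum_le (t := Finset.univ) (w := fun a => (π x a).toReal)
      (p := fun a => Qf x a / α) (fun a _ => (hπ' a).le) hsum1 (fun a _ => Set.mem_univ _)
    simpa [smul_eq_mul] using this
  have hle : ∑ a : A, (π x a).toReal * (Qf x a / α) ≤ Real.log Z := by
    rw [Real.le_log_iff_exp_le hZpos]
    exact hjensen
  have : α * (∑ a : A, (π x a).toReal * (Qf x a / α)) ≤ α * Real.log Z :=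
    mul_le_mul_of_nonneg_left hle hα.le
  calc V x = α * (∑ a : A, (π x a).toReal * (Qf x a / α)) := by
        rw [hVx, Finset.mul_sum]
        exact Finset.sum_congr rfl (fun a _ => by field_simp)
    _ ≤ α * Real.log Z := this
end

section
/- Let S, A be nonempty finite sets, p : S → A → PMF S, r : S → A → ℝ, γ ∈ [0,1), α > 0, and let π : S → PMF A be a policy with π(a|x) > 0 for all x, a. Let V^π be the fixed point of T^π, set Q^π(x,a) = r(x,a) + γ·∑_y p(y|x,a)·V^π(y), and let q_i(a|x) = π(a|x)·exp(Q^π(x,a)/α) / ∑_b π(b|x)·exp(Q^π(x,b)/α). Let V^{π,q_i}_α be the fixed point of the π-regularized Bellman operator T^{π,q_i}_α. Then V^{π,q_i}_α(x) ≥ V^π(x) for every state x. -/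
open scoped BigOperators

/-- The regularized value of the soft-greedy policy dominates the current value:
`V^{π,q_i}_α ≥ V^π` pointwise. -/
theorem stmt_9 {S A : Type*} [Fintype S] [Nonempty S] [Fintype A] [Nonempty A]
    (p : S → A → PMF S) (r : S → A → ℝ) (γ α : ℝ)
    (hγ0 : 0 ≤ γ) (hγ1 : γ < 1) (hα : 0 < α)
    (π : S → PMF A) (hπ : ∀ x a, 0 < π x a)
    (V : S → ℝ)
    (hV : ∀ x, V x =
      ∑ a : A, (π x a).toReal * (r x a + γ * ∑ y : S, (p x a y).toReal * V y))
    (Qf : S → A → ℝ)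
    (hQ : ∀ x a, Qf x a = r x a + γ * ∑ y : S, (p x a y).toReal * V y)
    (qi : S → A → ℝ)
    (hqi : ∀ x a, qi x a = (π x a).toReal * Real.exp (Qf x a / α) /
      ∑ b : A, (π x b).toReal * Real.exp (Qf x b / α))
    (Vreg : S → ℝ)
    (hVreg : ∀ x, Vreg x = ∑ a : A, qi x a *
      (r x a - α * Real.log (qi x a / (π x a).toReal)
        + γ * ∑ y : S, (p x a y).toReal * Vreg y)) :
    ∀ x, V x ≤ Vreg x := by
  classical
  have hwpos : ∀ x a, 0 < (π x a).toReal := fun x a =>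
    ENNReal.toReal_pos (hπ x a).ne' (PMF.apply_ne_top _ _)
  have hPnn : ∀ x a (y : S), 0 ≤ (p x a y).toReal := fun _ _ _ => ENNReal.toReal_nonneg
  have hPsum : ∀ x a, ∑ y : S, (p x a y).toReal = 1 := by
    intro x a
    rw [← ENNReal.toReal_sum (fun y _ => PMF.apply_ne_top _ _)]
    rw [← tsum_fintype (L := SummationFilter.unconditional _), (p x a).tsum_coe, ENNReal.toReal_one]
  have hwsum : ∀ x, ∑ a : A, (π x a).toReal = 1 := by
    intro x
    rw [← ENNReal.toReal_sum (fun a _ => PMF.apply_ne_top _ _)]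
    rw [← tsum_fintype (L := SummationFilter.unconditional _), (π x).tsum_coe, ENNReal.toReal_one]
  set Z : S → ℝ := fun x => ∑ b : A, (π x b).toReal * Real.exp (Qf x b / α) with hZ
  have hZpos : ∀ x, 0 < Z x := fun x =>
    Finset.sum_pos (fun b _ => mul_pos (hwpos x b) (Real.exp_pos _)) Finset.univ_nonempty
  have hqipos : ∀ x a, 0 < qi x a := by
    intro x a
    rw [hqi]
    exact div_pos (mul_pos (hwpos x a) (Real.exp_pos _)) (hZpos x)
  have hqisum : ∀ x, ∑ a : A, qi x a = 1 := by
    intro x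
    simp only [hqi]
    rw [← Finset.sum_div]
    exact div_self (hZpos x).ne'
  -- log of ratio
  have hlogratio : ∀ x a, Real.log (qi x a / (π x a).toReal) = Qf x a / α - Real.log (Z x) := by
    intro x a
    have hratio : qi x a / (π x a).toReal = Real.exp (Qf x a / α) / Z x := by
      rw [hqi, show (∑ b : A, ((π x) b).toReal * Real.exp (Qf x b / α)) = Z x from rfl,
        div_div, mul_comm (Z x) ((π x a).toReal)]
      rw [mul_div_mul_left _ _ (hwpos x a).ne']
    rw [hratio, Real.log_div (Real.exp_pos _).ne' (hZpos x).ne', Real.log_exp]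
  -- V as expectation of Q
  have hVQ : ∀ x, V x = ∑ a : A, (π x a).toReal * Qf x a := by
    intro x; rw [hV x]; exact Finset.sum_congr rfl fun a _ => by rw [hQ]
  -- Jensen: V x ≤ α * log (Z x)
  have hJensen : ∀ x, V x ≤ α * Real.log (Z x) := by
    intro x
    have hj : Real.exp (∑ a : A, (π x a).toReal • (Qf x a / α)) ≤
        ∑ a : A, (π x a).toReal • Real.exp (Qf x a / α) :=
      convexOn_exp.map_sum_le (fun a _ => (hwpos x a).le) (hwsum x) (fun a _ => trivial)
    simp only [smul_eq_mul] at hj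
    have hVα : V x / α = ∑ a : A, (π x a).toReal * (Qf x a / α) := by
      rw [hVQ x, Finset.sum_div]
      exact Finset.sum_congr rfl fun a _ => by ring
    have h1 : Real.exp (V x / α) ≤ Z x := by rw [hVα]; exact hj
    have h2 : V x / α ≤ Real.log (Z x) := by
      rw [← Real.log_exp (V x / α)]
      exact Real.log_le_log (Real.exp_pos _) h1
    calc V x = α * (V x / α) := by field_simp
      _ ≤ α * Real.log (Z x) := by exact mul_le_mul_of_nonneg_left h2 hα.le
  -- T applied to V equals α log Z
  have hTV : ∀ x, ∑ a : A, qi x a *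
      (r x a - α * Real.log (qi x a / (π x a).toReal)
        + γ * ∑ y : S, (p x a y).toReal * V y) = α * Real.log (Z x) := by
    intro x
    have : ∀ a : A, qi x a *
        (r x a - α * Real.log (qi x a / (π x a).toReal)
          + γ * ∑ y : S, (p x a y).toReal * V y) = qi x a * (α * Real.log (Z x)) := by
      intro a
      rw [hlogratio x a]
      congr 1
      have h2 : α * (Qf x a / α) = Qf x a := by field_simp
      have h3 := hQ x a
      rw [mul_sub, h2]
      linarith
    rw [Finset.sum_congr rfl fun a _ => this a, ← Finset.sum_mul, hqisum x, one_mul]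
  -- contraction step
  set M : ℝ := Finset.univ.sup' Finset.univ_nonempty (fun x : S => V x - Vreg x) with hM
  have hkey : ∀ x : S, V x - Vreg x ≤ γ * M := by
    intro x
    have hle : V x ≤ ∑ a : A, qi x a *
        (r x a - α * Real.log (qi x a / (π x a).toReal)
          + γ * ∑ y : S, (p x a y).toReal * V y) := by
      rw [hTV x]; exact hJensen x
    have hdiff : (∑ a : A, qi x a *
        (r x a - α * Real.log (qi x a / (π x a).toReal)
          + γ * ∑ y : S, (p x a y).toReal * V y)) - Vreg x
        = ∑ a : A, qi x a * (γ * ∑ y : S, (p x a y).toReal * (V y - Vreg y)) := by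
      rw [hVreg x, ← Finset.sum_sub_distrib]
      refine Finset.sum_congr rfl fun a _ => ?_
      rw [← mul_sub]
      congr 1
      have : ∑ y : S, (p x a y).toReal * (V y - Vreg y)
          = (∑ y : S, (p x a y).toReal * V y) - ∑ y : S, (p x a y).toReal * Vreg y := by
        rw [← Finset.sum_sub_distrib]
        exact Finset.sum_congr rfl fun y _ => by ring
      rw [this]; ring
    have hbound : ∑ a : A, qi x a * (γ * ∑ y : S, (p x a y).toReal * (V y - Vreg y))
        ≤ γ * M := by
      have hinner : ∀ a : A, ∑ y : S, (p x a y).toReal * (V y - Vreg y) ≤ M := by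
        intro a
        calc ∑ y : S, (p x a y).toReal * (V y - Vreg y)
            ≤ ∑ y : S, (p x a y).toReal * M := by
              refine Finset.sum_le_sum fun y _ => ?_
              exact mul_le_mul_of_nonneg_left
                (Finset.le_sup' (fun z : S => V z - Vreg z) (Finset.mem_univ y)) (hPnn x a y)
          _ = M := by rw [← Finset.sum_mul, hPsum x a, one_mul]
      calc ∑ a : A, qi x a * (γ * ∑ y : S, (p x a y).toReal * (V y - Vreg y))
          ≤ ∑ a : A, qi x a * (γ * M) := by
            refine Finset.sum_le_sum fun a _ => ?_
            exact mul_le_mul_of_nonneg_left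
              (mul_le_mul_of_nonneg_left (hinner a) hγ0) (hqipos x a).le
        _ = γ * M := by rw [← Finset.sum_mul, hqisum x, one_mul]
    linarith [hle, hdiff ▸ hbound]
  have hMle : M ≤ γ * M := by
    rw [hM]
    exact Finset.sup'_le _ _ fun x _ => hkey x
  have hM0 : M ≤ 0 := by nlinarith
  intro x
  have := Finset.le_sup' (fun z : S => V z - Vreg z) (Finset.mem_univ x)
  have : V x - Vreg x ≤ M := this
  linarith
end

section
/- Let A be a nonempty finite set, π a probability mass function on A with π(a) > 0 for all a, Q : A → ℝ, ε > 0 and η > 0. Define q_η(a) = π(a)·exp(Q(a)/η) / ∑_b π(b)·exp(Q(b)/η), and suppose KL(q_η‖π) = ε. Then q_η solves the KL-constrained maximization problem: for every probability mass function q on A with KL(q‖π) ≤ ε, one has ∑_a q(a)·Q(a) ≤ ∑_a q_η(a)·Q(a). -/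
open scoped BigOperators

/-- The Gibbs distribution `q_η ∝ π·exp(Q/η)` with `KL(q_η‖π) = ε` solves the
KL-constrained maximization of the expected Q-value. -/
theorem stmt_15 {A : Type*} [Fintype A] [Nonempty A]
    (π : PMF A) (hπ : ∀ a, 0 < π a) (Q : A → ℝ)
    (ε η : ℝ) (hε : 0 < ε) (hη : 0 < η)
    (qeta : A → ℝ)
    (hqeta : ∀ a, qeta a = (π a).toReal * Real.exp (Q a / η) /
        ∑ b : A, (π b).toReal * Real.exp (Q b / η))
    (KL : (A → ℝ) → ℝ)
    (hKL : ∀ f : A → ℝ, KL f = ∑ a : A, f a * Real.log (f a / (π a).toReal))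
    (hconstraint : KL qeta = ε) :
    ∀ q : PMF A, KL (fun a => (q a).toReal) ≤ ε →
      ∑ a : A, (q a).toReal * Q a ≤ ∑ a : A, qeta a * Q a := by
  intro q hq
  set Z : ℝ := ∑ b : A, (π b).toReal * Real.exp (Q b / η) with hZdef
  have hπR : ∀ a, 0 < (π a).toReal := fun a =>
    ENNReal.toReal_pos (hπ a).ne' (PMF.apply_ne_top π a)
  have hZ : 0 < Z :=
    Finset.sum_pos (fun a _ => mul_pos (hπR a) (Real.exp_pos _)) Finset.univ_nonempty
  have hqp : ∀ a, 0 < qeta a := fun a => by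
    rw [hqeta a]; exact div_pos (mul_pos (hπR a) (Real.exp_pos _)) hZ
  -- log of qeta
  have hlog_qeta : ∀ a, Real.log (qeta a) =
      Real.log (π a).toReal + Q a / η - Real.log Z := fun a => by
    rw [hqeta a, Real.log_div (mul_pos (hπR a) (Real.exp_pos _)).ne' hZ.ne',
      Real.log_mul (hπR a).ne' (Real.exp_pos _).ne', Real.log_exp]
  -- key identity
  have key : ∀ f : A → ℝ, (∀ a, 0 ≤ f a) →
      ∑ a : A, f a * Q a =
        η * (∑ a : A, f a * Real.log (f a / (π a).toReal))
        - η * (∑ a : A, f a * Real.log (f a / qeta a))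
        + η * Real.log Z * ∑ a : A, f a := by
    intro f hf
    rw [Finset.mul_sum, Finset.mul_sum, Finset.mul_sum, ← Finset.sum_sub_distrib,
      ← Finset.sum_add_distrib]
    refine Finset.sum_congr rfl fun a _ => ?_
    rcases eq_or_lt_of_le (hf a) with h | h
    · simp [← h]
    · have hQ : Q a = η * (Real.log (f a / (π a).toReal)
          - Real.log (f a / qeta a) + Real.log Z) := by
        rw [Real.log_div h.ne' (hπR a).ne', Real.log_div h.ne' (hqp a).ne',
          hlog_qeta a]
        field_simp
        ring
      rw [hQ]; ring
  have hq1 : ∑ a : A, (q a).toReal = 1 := by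
    have h := q.tsum_coe
    rw [tsum_fintype] at h
    rw [← ENNReal.toReal_sum (fun a _ => PMF.apply_ne_top q a), h, ENNReal.toReal_one]
  have hqeta1 : ∑ a : A, qeta a = 1 := by
    have : ∑ a : A, qeta a = (∑ a : A, (π a).toReal * Real.exp (Q a / η)) / Z := by
      rw [Finset.sum_div]; exact Finset.sum_congr rfl fun a _ => hqeta a
    rw [this, ← hZdef, div_self hZ.ne']
  -- Gibbs inequality: KL(q‖qeta) ≥ 0
  have gibbs : 0 ≤ ∑ a : A, (q a).toReal * Real.log ((q a).toReal / qeta a) := by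
    have h1 : ∑ a : A, (q a).toReal * Real.log (qeta a / (q a).toReal) ≤ 0 := by
      have : ∑ a : A, (q a).toReal * Real.log (qeta a / (q a).toReal) ≤
          ∑ a : A, (qeta a - (q a).toReal) := by
        refine Finset.sum_le_sum fun a _ => ?_
        rcases eq_or_lt_of_le (ENNReal.toReal_nonneg : (0:ℝ) ≤ (q a).toReal) with h | h
        · simp [← h]; exact le_of_lt (hqp a)
        · calc (q a).toReal * Real.log (qeta a / (q a).toReal)
              ≤ (q a).toReal * (qeta a / (q a).toReal - 1) := by
                exact mul_le_mul_of_nonneg_left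
                  (Real.log_le_sub_one_of_pos (div_pos (hqp a) h)) h.le
            _ = qeta a - (q a).toReal := by field_simp
      calc ∑ a : A, (q a).toReal * Real.log (qeta a / (q a).toReal)
          ≤ ∑ a : A, (qeta a - (q a).toReal) := this
        _ = 0 := by rw [Finset.sum_sub_distrib, hqeta1, hq1]; ring
    have h2 : ∑ a : A, (q a).toReal * Real.log ((q a).toReal / qeta a) =
        - ∑ a : A, (q a).toReal * Real.log (qeta a / (q a).toReal) := by
      rw [← Finset.sum_neg_distrib]
      refine Finset.sum_congr rfl fun a _ => ?_
      rcases eq_or_lt_of_le (ENNReal.toReal_nonneg : (0:ℝ) ≤ (q a).toReal) with h | h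
      · simp [← h]
      · rw [Real.log_div h.ne' (hqp a).ne', Real.log_div (hqp a).ne' h.ne']; ring
    rw [h2]; linarith
  have keyq := key (fun a => (q a).toReal) (fun a => ENNReal.toReal_nonneg)
  have keyqeta := key qeta (fun a => (hqp a).le)
  have hself : ∑ a : A, qeta a * Real.log (qeta a / qeta a) = 0 := by
    refine Finset.sum_eq_zero fun a _ => ?_
    rw [div_self (hqp a).ne', Real.log_one, mul_zero]
  rw [hKL] at hq hconstraint
  rw [keyq, keyqeta, hself, hqeta1, hq1, hconstraint]
  have h3 : ∑ a : A, (q a).toReal * Real.log ((q a).toReal / (π a).toReal) ≤ ε := hq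
  nlinarith [gibbs, hη.le]
end

section
/- Let S and A be nonempty finite sets, μ a probability mass function on S, π : S → PMF A with π(a|s) > 0 for all s, a, Q : S → A → ℝ, and ε > 0. Then the dual function g : (0,∞) → ℝ defined by g(η) = η·ε + η·∑_s μ(s)·log(∑_a π(a|s)·exp(Q(s,a)/η)) is convex on the interval (0,∞). -/
open scoped BigOperators

/-- Sum of convex functions on a convex set is convex. -/
lemma aux_convexOn_sum {ι : Type*} (t : Finset ι) {s : Set ℝ} (hs : Convex ℝ s)
    (f : ι → ℝ → ℝ) (h : ∀ i ∈ t, ConvexOn ℝ s (f i)) :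
    ConvexOn ℝ s (fun x => ∑ i ∈ t, f i x) := by
  classical
  induction t using Finset.cons_induction with
  | empty => simpa using convexOn_const 0 hs
  | cons i t hit ih =>
    simp only [Finset.sum_cons]
    exact (h i (Finset.mem_cons_self i t)).add
      (ih fun j hj => h j (Finset.mem_cons_of_mem hj))

/-- The perspective-type function `η ↦ η * log ∑ a, w a * exp (c a / η)` is convex on `(0,∞)`
when all weights are positive. -/
lemma aux_convexOn_perspective {A : Type*} [Fintype A] [Nonempty A]
    (w : A → ℝ) (hw : ∀ a, 0 < w a) (c : A → ℝ) :
    ConvexOn ℝ (Set.Ioi (0 : ℝ))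
      (fun η : ℝ => η * Real.log (∑ a : A, w a * Real.exp (c a / η))) := by
  have hsum : ∀ η : ℝ, 0 < ∑ a : A, w a * Real.exp (c a / η) := fun η =>
    Finset.sum_pos (fun a _ => mul_pos (hw a) (Real.exp_pos _)) Finset.univ_nonempty
  refine ⟨convex_Ioi 0, ?_⟩
  intro x hx y hy p q hp hq hpq
  simp only [smul_eq_mul] at *
  rw [Set.mem_Ioi] at hx hy
  rcases eq_or_lt_of_le hp with hp0 | hp
  · have hq1 : q = 1 := by linarith
    subst hq1; rw [← hp0]; simp
  rcases eq_or_lt_of_le hq with hq0 | hq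
  · have hp1 : p = 1 := by linarith
    subst hp1; rw [← hq0]; simp
  set η : ℝ := p * x + q * y with hη_def
  have hη : 0 < η := by positivity
  set lam : ℝ := p * x / η with hlam_def
  have hlam : 0 < lam := by positivity
  have hlam1 : lam + q * y / η = 1 := by
    rw [hlam_def, ← add_div, ← hη_def, div_self hη.ne']
  have hlam' : 0 < q * y / η := by positivity
  set Aq : ℝ := ∑ a : A, w a * Real.exp (c a / x) with hA_def
  set Bq : ℝ := ∑ a : A, w a * Real.exp (c a / y) with hB_def
  have hApos : 0 < Aq := hsum x
  have hBpos : 0 < Bq := hsum y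
  -- Hölder step: C ≤ Aq ^ lam * Bq ^ (1 - lam)
  have key : ∑ a : A, w a * Real.exp (c a / η) ≤ Aq ^ lam * Bq ^ (q * y / η) := by
    have hterm : ∀ a : A, w a * Real.exp (c a / η)
        = (w a * Real.exp (c a / x)) ^ lam * (w a * Real.exp (c a / y)) ^ (q * y / η) := by
      intro a
      rw [Real.mul_rpow (hw a).le (Real.exp_pos _).le,
        Real.mul_rpow (hw a).le (Real.exp_pos _).le,
        ← Real.exp_mul, ← Real.exp_mul]
      have h1 : (w a) ^ lam * Real.exp (c a / x * lam) *
          ((w a) ^ (q * y / η) * Real.exp (c a / y * (q * y / η)))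
          = (w a) ^ lam * (w a) ^ (q * y / η) *
            Real.exp (c a / x * lam + c a / y * (q * y / η)) := by
        rw [Real.exp_add]; ring
      rw [h1, ← Real.rpow_add (hw a), hlam1, Real.rpow_one]
      congr 1
      have e1 : c a / x * lam = c a * p / η := by
        rw [hlam_def]; field_simp
      have e2 : c a / y * (q * y / η) = c a * q / η := by
        field_simp
      rw [e1, e2, ← add_div, ← mul_add, hpq, mul_one]
    calc ∑ a : A, w a * Real.exp (c a / η)
        = ∑ a : A, (w a * Real.exp (c a / x)) ^ lam *
            (w a * Real.exp (c a / y)) ^ (q * y / η) := by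
          exact Finset.sum_congr rfl fun a _ => hterm a
      _ ≤ ∑ a : A, Aq ^ lam * Bq ^ (q * y / η) *
            (lam * (w a * Real.exp (c a / x) / Aq) +
             q * y / η * (w a * Real.exp (c a / y) / Bq)) := by
          refine Finset.sum_le_sum fun a _ => ?_
          have hfa : 0 < w a * Real.exp (c a / x) := mul_pos (hw a) (Real.exp_pos _)
          have hga : 0 < w a * Real.exp (c a / y) := mul_pos (hw a) (Real.exp_pos _)
          have hAM := Real.geom_mean_le_arith_mean2_weighted hlam.le hlam'.le
            (div_nonneg hfa.le hApos.le) (div_nonneg hga.le hBpos.le) hlam1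
          have hrw : (w a * Real.exp (c a / x)) ^ lam *
              (w a * Real.exp (c a / y)) ^ (q * y / η)
              = Aq ^ lam * Bq ^ (q * y / η) *
                ((w a * Real.exp (c a / x) / Aq) ^ lam *
                 (w a * Real.exp (c a / y) / Bq) ^ (q * y / η)) := by
            rw [Real.div_rpow hfa.le hApos.le, Real.div_rpow hga.le hBpos.le]
            field_simp
            try ring
          rw [hrw]
          exact mul_le_mul_of_nonneg_left hAM (by positivity)
      _ = Aq ^ lam * Bq ^ (q * y / η) := by
          rw [← Finset.mul_sum]
          have : ∑ a : A, (lam * (w a * Real.exp (c a / x) / Aq) +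
              q * y / η * (w a * Real.exp (c a / y) / Bq)) = 1 := by
            rw [Finset.sum_add_distrib, ← Finset.mul_sum, ← Finset.mul_sum,
              ← Finset.sum_div, ← Finset.sum_div, ← hA_def, ← hB_def,
              div_self hApos.ne', div_self hBpos.ne', mul_one, mul_one, hlam1]
          rw [this, mul_one]
  -- take logs
  have hlog : Real.log (∑ a : A, w a * Real.exp (c a / η))
      ≤ lam * Real.log Aq + (q * y / η) * Real.log Bq := by
    calc Real.log (∑ a : A, w a * Real.exp (c a / η))
        ≤ Real.log (Aq ^ lam * Bq ^ (q * y / η)) := Real.log_le_log (hsum η) key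
      _ = lam * Real.log Aq + (q * y / η) * Real.log Bq := by
          rw [Real.log_mul (by positivity) (by positivity),
            Real.log_rpow hApos, Real.log_rpow hBpos]
  have := mul_le_mul_of_nonneg_left hlog hη.le
  calc η * Real.log (∑ a : A, w a * Real.exp (c a / η))
      ≤ η * (lam * Real.log Aq + (q * y / η) * Real.log Bq) := this
    _ = p * (x * Real.log Aq) + q * (y * Real.log Bq) := by
        rw [hlam_def]; field_simp; try ring

/-- The dual function `g(η) = η·ε + η·∑_s μ(s)·log ∑_a π(a|s)·exp(Q(s,a)/η)` of the
hard-constrained E-step is convex on `(0, ∞)`. -/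
theorem stmt_16 {S A : Type*} [Fintype S] [Nonempty S] [Fintype A] [Nonempty A]
    (μ : PMF S) (π : S → PMF A) (hπ : ∀ s a, 0 < π s a)
    (Q : S → A → ℝ) (ε : ℝ) (hε : 0 < ε) :
    ConvexOn ℝ (Set.Ioi (0 : ℝ)) (fun η : ℝ =>
      η * ε + η * ∑ s : S, (μ s).toReal *
        Real.log (∑ a : A, (π s a).toReal * Real.exp (Q s a / η))) := by
  have hrw : (fun η : ℝ =>
      η * ε + η * ∑ s : S, (μ s).toReal *
        Real.log (∑ a : A, (π s a).toReal * Real.exp (Q s a / η)))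
      = fun η : ℝ => (η * ε) + ∑ s : S, (μ s).toReal *
        (η * Real.log (∑ a : A, (π s a).toReal * Real.exp (Q s a / η))) := by
    funext η
    rw [Finset.mul_sum]
    congr 1
    exact Finset.sum_congr rfl fun s _ => by ring
  rw [hrw]
  refine ConvexOn.add ?_ ?_
  · exact ⟨convex_Ioi 0, fun x _ y _ p q hp hq hpq => by
      simp only [smul_eq_mul]; exact le_of_eq (by ring)⟩
  · refine aux_convexOn_sum Finset.univ (convex_Ioi 0) _ fun s _ => ?_
    have hπfin : ∀ a, (π s a).toReal ≠ 0 ∨ True := fun a => Or.inr trivial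
    have hpos : ∀ a, 0 < (π s a).toReal := by
      intro a
      have h1 : π s a ≤ 1 := PMF.coe_le_one _ _
      have h2 : π s a ≠ ⊤ := ne_top_of_le_ne_top ENNReal.one_ne_top h1
      exact ENNReal.toReal_pos (hπ s a).ne' h2
    have hconv := aux_convexOn_perspective (fun a => (π s a).toReal) hpos (Q s)
    have hnn : (0 : ℝ) ≤ (μ s).toReal := ENNReal.toReal_nonneg
    simpa [smul_eq_mul] using hconv.smul hnn
end

section
/- Let S, A be nonempty finite sets, p : S → A → PMF S, r : S → A → ℝ, γ ∈ [0,1), and let q, q' : S → PMF A be two policies with value functions V^q and V^{q'} (the fixed points of T^q and T^{q'} respectively). Let P^{q'} be the row-stochastic matrix P^{q'}(x,y) = ∑_a q'(a|x)·p(y|x,a). Then, as vectors indexed by S, V^{q'} − V^q = (I − γ·P^{q'})⁻¹·(T^{q'} V^q − V^q). -/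
open scoped BigOperators
open Matrix

lemma pmf_sum_toReal_aux17 {α : Type*} [Fintype α] (f : PMF α) :
    ∑ a : α, (f a).toReal = 1 := by
  have h := f.tsum_coe
  rw [tsum_fintype] at h
  rw [← ENNReal.toReal_sum (fun a _ => f.apply_ne_top a), h, ENNReal.toReal_one]

/-- Value-difference identity: `V^{q'} − V^q = (I − γP^{q'})⁻¹ (T^{q'} V^q − V^q)`. -/
theorem stmt_17 {S A : Type*} [Fintype S] [DecidableEq S] [Nonempty S]
    [Fintype A] [Nonempty A]
    (p : S → A → PMF S) (r : S → A → ℝ) (γ : ℝ) (hγ0 : 0 ≤ γ) (hγ1 : γ < 1)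
    (q q' : S → PMF A)
    (Tq' : (S → ℝ) → S → ℝ)
    (hTq' : ∀ V x, Tq' V x =
      ∑ a : A, (q' x a).toReal * (r x a + γ * ∑ y : S, (p x a y).toReal * V y))
    (P' : Matrix S S ℝ)
    (hP' : ∀ x y, P' x y = ∑ a : A, (q' x a).toReal * (p x a y).toReal)
    (V V' : S → ℝ)
    (hV : ∀ x, V x =
      ∑ a : A, (q x a).toReal * (r x a + γ * ∑ y : S, (p x a y).toReal * V y))
    (hV' : Tq' V' = V') :
    (fun x => V' x - V x) = (1 - γ • P')⁻¹ *ᵥ (fun x => Tq' V x - V x) := by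
  set M : Matrix S S ℝ := 1 - γ • P' with hM
  set w : S → ℝ := fun x => V' x - V x with hw
  have hP'nonneg : ∀ x y, 0 ≤ P' x y := by
    intro x y; rw [hP']
    exact Finset.sum_nonneg fun a _ => mul_nonneg ENNReal.toReal_nonneg ENNReal.toReal_nonneg
  have hrow : ∀ x, ∑ y, P' x y = 1 := by
    intro x
    simp_rw [hP']
    rw [Finset.sum_comm]
    calc ∑ a : A, ∑ y : S, (q' x a).toReal * (p x a y).toReal
        = ∑ a : A, (q' x a).toReal * ∑ y : S, (p x a y).toReal := by
          simp [Finset.mul_sum]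
      _ = 1 := by simp [pmf_sum_toReal_aux17]
  have expand : ∀ (W : S → ℝ) (x : S),
      Tq' W x = (∑ a : A, (q' x a).toReal * r x a) + γ * ∑ y, P' x y * W y := by
    intro W x
    rw [hTq']
    simp_rw [mul_add, Finset.sum_add_distrib]
    congr 1
    simp_rw [hP', Finset.mul_sum, Finset.sum_mul]
    rw [Finset.sum_comm]
    refine Finset.sum_congr rfl fun a _ => ?_
    rw [Finset.mul_sum]
    exact Finset.sum_congr rfl fun y _ => by ring
  have hmv : ∀ (u : S → ℝ) (x : S), (M *ᵥ u) x = u x - γ * ∑ y, P' x y * u y := by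
    intro u x
    rw [hM, Matrix.sub_mulVec, Matrix.one_mulVec, Matrix.smul_mulVec]
    simp [Matrix.mulVec, dotProduct]
  have key : M *ᵥ w = fun x => Tq' V x - V x := by
    funext x
    have h1 := expand V' x
    have h2 := expand V x
    have h3 : Tq' V' x = V' x := by rw [hV']
    have := hmv w x
    simp only [hw] at this ⊢
    have hsum : ∑ y, P' x y * (V' y - V y)
        = ∑ y, P' x y * V' y - ∑ y, P' x y * V y := by
      rw [← Finset.sum_sub_distrib]
      exact Finset.sum_congr rfl fun y _ => by ring
    rw [this, hsum]
    linarith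
  have hker : ∀ u : S → ℝ, M *ᵥ u = 0 → u = 0 := by
    intro u hu
    have hfix : ∀ x, u x = γ * ∑ y, P' x y * u y := by
      intro x
      have := congrFun hu x
      rw [hmv] at this
      simpa [sub_eq_zero] using this
    obtain ⟨x, -, hx⟩ := Finset.exists_max_image Finset.univ (fun z => |u z|)
      ⟨Classical.arbitrary S, Finset.mem_univ _⟩
    have hux : |u x| = 0 := by
      have h1 : |u x| ≤ γ * ∑ y, P' x y * |u y| := by
        rw [hfix x, abs_mul, abs_of_nonneg hγ0]
        refine mul_le_mul_of_nonneg_left ?_ hγ0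
        refine (Finset.abs_sum_le_sum_abs _ _).trans (le_of_eq ?_)
        exact Finset.sum_congr rfl fun y _ => by
          rw [abs_mul, abs_of_nonneg (hP'nonneg x y)]
      have h2 : ∑ y, P' x y * |u y| ≤ ∑ y, P' x y * |u x| :=
        Finset.sum_le_sum fun y _ =>
          mul_le_mul_of_nonneg_left (hx y (Finset.mem_univ y)) (hP'nonneg x y)
      have h3 : ∑ y, P' x y * |u x| = |u x| := by
        rw [← Finset.sum_mul, hrow, one_mul]
      have h4 : |u x| ≤ γ * |u x| := by
        calc |u x| ≤ γ * ∑ y, P' x y * |u y| := h1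
          _ ≤ γ * ∑ y, P' x y * |u x| := mul_le_mul_of_nonneg_left h2 hγ0
          _ = γ * |u x| := by rw [h3]
      nlinarith [abs_nonneg (u x)]
    funext y
    have : |u y| ≤ 0 := hux ▸ hx y (Finset.mem_univ y)
    simpa using abs_nonpos_iff.mp this
  have hinj : Function.Injective (M.mulVec) := by
    intro u v huv
    have h := hker (u - v) (by rw [Matrix.mulVec_sub, huv, sub_self])
    exact sub_eq_zero.mp h
  have hdet : IsUnit M.det :=
    (Matrix.isUnit_iff_isUnit_det M).mp (Matrix.mulVec_injective_iff_isUnit.mp hinj)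
  rw [← key, Matrix.mulVec_mulVec, Matrix.nonsing_inv_mul M hdet, Matrix.one_mulVec]
end

section
/- Let S, A be nonempty finite sets, p : S → A → PMF S, r : S → A → ℝ, γ ∈ [0,1), α > 0, and let π : S → PMF A be a policy with π(a|x) > 0 for all x, a. Define the soft-optimal Bellman operator (L V)(x) = α·log ∑_a π(a|x)·exp((r(x,a) + γ·∑_y p(y|x,a)·V(y))/α). Then L is Lipschitz with constant γ in the supremum norm, hence has a unique fixed point V : S → ℝ; and with Q(x,a) = r(x,a) + γ·∑_y p(y|x,a)·V(y) and the Gibbs policy q*(a|x) = π(a|x)·exp(Q(x,a)/α) / ∑_b π(b|x)·exp(Q(x,b)/α), the regularized optimal Bellman equation V(x) = r(x,a) − α·log(q*(a|x)/π(a|x)) + γ·∑_y p(y|x,a)·V(y) holds for EVERY state x and EVERY action a (not only in expectation over a). -/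
open scoped BigOperators

lemma pmf_toReal_sum_one {β : Type*} [Fintype β] (q : PMF β) :
    ∑ b : β, (q b).toReal = 1 := by
  have h := q.tsum_coe
  rw [tsum_fintype] at h
  have : (∑ b : β, q b).toReal = ∑ b : β, (q b).toReal :=
    ENNReal.toReal_sum (fun b _ => q.apply_ne_top b)
  rw [h] at this
  simpa using this.symm

lemma pmf_toReal_nonneg {β : Type*} (q : PMF β) (b : β) : 0 ≤ (q b).toReal :=
  ENNReal.toReal_nonneg

/-- The soft-optimal Bellman operator `L` is γ-Lipschitz in the sup norm, hence has a
unique fixed point `V`; and with `Q(x,a) = r(x,a) + γ·E_p[V]` and the Gibbs policy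
`q*(a|x) ∝ π(a|x)·exp(Q(x,a)/α)`, the regularized optimal Bellman equation
`V(x) = r(x,a) − α·log(q*(a|x)/π(a|x)) + γ·E_p[V]` holds for every state `x` and
EVERY action `a`. -/
theorem stmt_19 {S A : Type*} [Fintype S] [Nonempty S] [Fintype A] [Nonempty A]
    (p : S → A → PMF S) (r : S → A → ℝ) (γ α : ℝ)
    (hγ0 : 0 ≤ γ) (hγ1 : γ < 1) (hα : 0 < α)
    (π : S → PMF A) (hπ : ∀ x a, 0 < π x a)
    (L : (S → ℝ) → S → ℝ)
    (hL : ∀ V x, L V x = α * Real.log (∑ a : A, (π x a).toReal *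
      Real.exp ((r x a + γ * ∑ y : S, (p x a y).toReal * V y) / α))) :
    (∀ V₁ V₂ : S → ℝ, ‖L V₁ - L V₂‖ ≤ γ * ‖V₁ - V₂‖) ∧
    (∃! V : S → ℝ, L V = V) ∧
    (∀ V : S → ℝ, L V = V →
      ∀ (Qf : S → A → ℝ) (qstar : S → A → ℝ),
        (∀ x a, Qf x a = r x a + γ * ∑ y : S, (p x a y).toReal * V y) →
        (∀ x a, qstar x a = (π x a).toReal * Real.exp (Qf x a / α) /
          ∑ b : A, (π x b).toReal * Real.exp (Qf x b / α)) →
        ∀ x a, V x = r x a - α * Real.log (qstar x a / (π x a).toReal)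
          + γ * ∑ y : S, (p x a y).toReal * V y) := by
  have hπpos : ∀ x a, 0 < (π x a).toReal := fun x a =>
    ENNReal.toReal_pos (hπ x a).ne' ((π x).apply_ne_top a)
  -- pointwise bound lemma
  have hexp_bound : ∀ (V₁ V₂ : S → ℝ) (x : S) (a : A),
      (r x a + γ * ∑ y : S, (p x a y).toReal * V₁ y) / α ≤
      (r x a + γ * ∑ y : S, (p x a y).toReal * V₂ y) / α + γ * ‖V₁ - V₂‖ / α := by
    intro V₁ V₂ x a
    rw [← add_div, div_le_div_iff_of_pos_right hα]
    have hsum : ∑ y : S, (p x a y).toReal * V₁ y - ∑ y : S, (p x a y).toReal * V₂ y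
        ≤ ‖V₁ - V₂‖ := by
      rw [← Finset.sum_sub_distrib]
      have : ∀ y ∈ Finset.univ, (p x a y).toReal * V₁ y - (p x a y).toReal * V₂ y
          ≤ (p x a y).toReal * ‖V₁ - V₂‖ := by
        intro y _
        rw [← mul_sub]
        refine mul_le_mul_of_nonneg_left ?_ (pmf_toReal_nonneg _ y)
        calc V₁ y - V₂ y ≤ |V₁ y - V₂ y| := le_abs_self _
          _ = ‖(V₁ - V₂) y‖ := by simp [Real.norm_eq_abs]
          _ ≤ ‖V₁ - V₂‖ := norm_le_pi_norm _ y
      calc ∑ y : S, ((p x a y).toReal * V₁ y - (p x a y).toReal * V₂ y)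
          ≤ ∑ y : S, (p x a y).toReal * ‖V₁ - V₂‖ := Finset.sum_le_sum this
        _ = ‖V₁ - V₂‖ := by rw [← Finset.sum_mul, pmf_toReal_sum_one]; ring
    nlinarith [mul_le_mul_of_nonneg_left hsum hγ0]
  have hLpos : ∀ (V : S → ℝ) (x : S),
      0 < ∑ a : A, (π x a).toReal *
        Real.exp ((r x a + γ * ∑ y : S, (p x a y).toReal * V y) / α) := by
    intro V x
    refine Finset.sum_pos (fun a _ => mul_pos (hπpos x a) (Real.exp_pos _)) ?_
    exact Finset.univ_nonempty
  -- one-sided Lipschitz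
  have hside : ∀ (V₁ V₂ : S → ℝ) (x : S), L V₁ x ≤ L V₂ x + γ * ‖V₁ - V₂‖ := by
    intro V₁ V₂ x
    rw [hL, hL]
    set c := γ * ‖V₁ - V₂‖ / α with hc
    have hsum_le : ∑ a : A, (π x a).toReal *
          Real.exp ((r x a + γ * ∑ y : S, (p x a y).toReal * V₁ y) / α) ≤
        Real.exp c * ∑ a : A, (π x a).toReal *
          Real.exp ((r x a + γ * ∑ y : S, (p x a y).toReal * V₂ y) / α) := by
      rw [Finset.mul_sum]
      refine Finset.sum_le_sum fun a _ => ?_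
      have := hexp_bound V₁ V₂ x a
      calc (π x a).toReal * Real.exp ((r x a + γ * ∑ y : S, (p x a y).toReal * V₁ y) / α)
          ≤ (π x a).toReal *
            Real.exp ((r x a + γ * ∑ y : S, (p x a y).toReal * V₂ y) / α + c) :=
            mul_le_mul_of_nonneg_left (Real.exp_le_exp.mpr this) (pmf_toReal_nonneg _ a)
        _ = Real.exp c * ((π x a).toReal *
            Real.exp ((r x a + γ * ∑ y : S, (p x a y).toReal * V₂ y) / α)) := by
            rw [Real.exp_add]; ring
    have hlog := Real.log_le_log (hLpos V₁ x) hsum_le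
    rw [Real.log_mul (Real.exp_pos c).ne' (hLpos V₂ x).ne', Real.log_exp] at hlog
    have := mul_le_mul_of_nonneg_left hlog hα.le
    have hca : α * c = γ * ‖V₁ - V₂‖ := by
      rw [hc]; field_simp
    nlinarith
  have key : ∀ V₁ V₂ : S → ℝ, ‖L V₁ - L V₂‖ ≤ γ * ‖V₁ - V₂‖ := by
    intro V₁ V₂
    refine (pi_norm_le_iff_of_nonneg (by positivity)).mpr fun x => ?_
    rw [Pi.sub_apply, Real.norm_eq_abs, abs_le]
    constructor
    · have := hside V₂ V₁ x
      rw [show ‖V₂ - V₁‖ = ‖V₁ - V₂‖ from norm_sub_rev _ _] at this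
      linarith
    · have := hside V₁ V₂ x; linarith
  refine ⟨key, ?_, ?_⟩
  · -- unique fixed point via Banach
    have hlip : LipschitzWith ⟨γ, hγ0⟩ L := by
      refine LipschitzWith.of_dist_le_mul fun V₁ V₂ => ?_
      rw [dist_eq_norm, dist_eq_norm]
      exact_mod_cast key V₁ V₂
    have hcontr : ContractingWith ⟨γ, hγ0⟩ L := ⟨by exact_mod_cast hγ1, hlip⟩
    refine ⟨hcontr.fixedPoint L, hcontr.fixedPoint_isFixedPt, fun V hV => ?_⟩
    exact hcontr.fixedPoint_unique hV
  · intro V hV Qf qstar hQ hq x a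
    have hVx : V x = α * Real.log (∑ b : A, (π x b).toReal * Real.exp (Qf x b / α)) := by
      conv_lhs => rw [← hV]
      rw [hL]
      congr 1
      refine congrArg Real.log (Finset.sum_congr rfl fun b _ => ?_)
      rw [hQ]
    set Z := ∑ b : A, (π x b).toReal * Real.exp (Qf x b / α) with hZ
    have hZpos : 0 < Z := by
      refine Finset.sum_pos (fun b _ => mul_pos (hπpos x b) (Real.exp_pos _)) Finset.univ_nonempty
    have hratio : qstar x a / (π x a).toReal = Real.exp (Qf x a / α) / Z := by
      have h1 : qstar x a = (π x a).toReal * Real.exp (Qf x a / α) / Z := hq x a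
      rw [h1, div_div, mul_comm Z ((π x a).toReal)]
      exact mul_div_mul_left _ _ (hπpos x a).ne'
    rw [hratio, Real.log_div (Real.exp_pos _).ne' hZpos.ne', Real.log_exp, hVx]
    have hQa := hQ x a
    field_simp
    linarith [hQ x a]
end
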